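/- The coreness of a vertex v equals the largest s such that v has at least s neighbors of coreness at least s; that is, coreness(v) = max{s : |{u ∈ N(v) : coreness(u) ≥ s}| ≥ s} (with the maximum over s ≥ 0, taking s = 0 always admissible). -/

import Mathlib

/-!
The `k`-core is itself a core set, being a union of core sets, and adding to a core set a
vertex with at least `k` neighbours in it yields again a core set. Hence `v` lies in the
`k`-core exactly when it has at least `k` neighbours there; as the `k`-cores decrease in `k`,
these are the neighbours of coreness at least `k`. So both sides are `Nat.findGreatest` of the
same predicate.
-/

open scoped Classical
open Finset

noncomputable section

variable {V : Type*} [Fintype V]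

/-- `S` induces a subgraph of `G` in which every vertex has degree at least `k`. -/
def IsCoreSet (G : SimpleGraph V) (k : ℕ) (S : Finset V) : Prop :=
  ∀ v ∈ S, k ≤ (S.filter (G.Adj v)).card

/-- The vertex set of the `k`-core of `G`: all vertices lying in some induced
subgraph of minimum degree at least `k`. -/
def coreSet (G : SimpleGraph V) (k : ℕ) : Finset V :=
  Finset.univ.filter fun v => ∃ S : Finset V, IsCoreSet G k S ∧ v ∈ S

/-- The coreness of `v`: the largest `k` such that `v` belongs to the `k`-core. -/
def coreness (G : SimpleGraph V) (v : V) : ℕ :=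
  Nat.findGreatest (fun k => v ∈ coreSet G k) (Fintype.card V)

section IsCoreSet

variable {V : Type*} {G : SimpleGraph V} {k l : ℕ} {S : Finset V} {v : V}

lemma IsCoreSet.anti (h : k ≤ l) (hS : IsCoreSet G l S) : IsCoreSet G k S :=
  fun w hw => h.trans (hS w hw)

lemma IsCoreSet.insert (hS : IsCoreSet G k S) (hv : k ≤ (S.filter (G.Adj v)).card) :
    IsCoreSet G k (insert v S) := by
  intro w hw
  rcases mem_insert.1 hw with rfl | hwS
  · exact hv.trans (card_le_card (filter_subset_filter _ (subset_insert _ _)))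
  · exact (hS w hwS).trans (card_le_card (filter_subset_filter _ (subset_insert _ _)))

end IsCoreSet

section CoreSet

variable {G : SimpleGraph V} {k : ℕ} {S : Finset V} {v : V}

lemma mem_coreSet : v ∈ coreSet G k ↔ ∃ S, IsCoreSet G k S ∧ v ∈ S := by
  simp only [coreSet, mem_filter, mem_univ, true_and]

lemma IsCoreSet.subset_coreSet (hS : IsCoreSet G k S) : S ⊆ coreSet G k :=
  fun _ hw => mem_coreSet.2 ⟨S, hS, hw⟩

lemma isCoreSet_coreSet : IsCoreSet G k (coreSet G k) := by
  intro w hw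
  obtain ⟨S, hS, hwS⟩ := mem_coreSet.1 hw
  exact (hS w hwS).trans (card_le_card (filter_subset_filter _ hS.subset_coreSet))

lemma coreSet_anti : Antitone (coreSet G) :=
  fun _ _ h _ hw =>
    let ⟨S, hS, hwS⟩ := mem_coreSet.1 hw
    mem_coreSet.2 ⟨S, hS.anti h, hwS⟩

lemma mem_coreSet_zero : v ∈ coreSet G 0 :=
  mem_coreSet.2 ⟨univ, fun _ _ => Nat.zero_le _, mem_univ v⟩

lemma mem_coreSet_iff_le_card_filter_adj :
    v ∈ coreSet G k ↔ k ≤ ((coreSet G k).filter (G.Adj v)).card :=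
  ⟨isCoreSet_coreSet v,
    fun hv => (isCoreSet_coreSet.insert hv).subset_coreSet (mem_insert_self v _)⟩

lemma le_card_of_mem_coreSet (hv : v ∈ coreSet G k) : k ≤ Fintype.card V :=
  (mem_coreSet_iff_le_card_filter_adj.1 hv).trans (Finset.card_le_univ _)

lemma mem_coreSet_iff_le_coreness : v ∈ coreSet G k ↔ k ≤ coreness G v :=
  ⟨fun hv => Nat.le_findGreatest (le_card_of_mem_coreSet hv) hv,
    fun hk => coreSet_anti hk <|
      Nat.findGreatest_spec (P := fun k => v ∈ coreSet G k) (Nat.zero_le _) mem_coreSet_zero⟩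

lemma filter_adj_coreSet :
    (coreSet G k).filter (G.Adj v) = univ.filter fun u => G.Adj v u ∧ k ≤ coreness G u := by
  ext u
  simp only [mem_filter, mem_univ, true_and, mem_coreSet_iff_le_coreness, and_comm]

end CoreSet

theorem coreness_eq_findGreatest_neighbors_general (G : SimpleGraph V) (v : V) :
    coreness G v =
      Nat.findGreatest
        (fun s => s ≤ (Finset.univ.filter fun u => G.Adj v u ∧ s ≤ coreness G u).card)
        (Fintype.card V) := by
  rw [coreness]
  congr 1
  funext k
  rw [mem_coreSet_iff_le_card_filter_adj, filter_adj_coreSet]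

theorem coreness_eq_findGreatest_neighbors (G : SimpleGraph V) [Nonempty V] (v : V) :
    coreness G v =
      Nat.findGreatest
        (fun s => s ≤ (Finset.univ.filter fun u => G.Adj v u ∧ s ≤ coreness G u).card)
        (Fintype.card V) :=
  coreness_eq_findGreatest_neighbors_general G v

end
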